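/- Let φ : A ⊗ B ⊗ C → ℂ be a trilinear form on finite-dimensional complex vector spaces with dim C ≥ dim A + dim B − 1. Suppose there exist nonzero a ∈ A, b ∈ B with φ(a ⊗ b ⊗ c) = 0 for all c ∈ C. Then there exists a nonzero c ∈ C such that φ(a' ⊗ b ⊗ c) = 0 for all a' ∈ A and φ(a ⊗ b' ⊗ c) = 0 for all b' ∈ B. -/

import Mathlib

open TensorProduct

theorem stmt6 (A B C : Type*) [AddCommGroup A] [Module ℂ A] [FiniteDimensional ℂ A]
    [AddCommGroup B] [Module ℂ B] [FiniteDimensional ℂ B]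
    [AddCommGroup C] [Module ℂ C] [FiniteDimensional ℂ C]
    (hdim : Module.finrank ℂ C ≥ Module.finrank ℂ A + Module.finrank ℂ B - 1)
    (φ : (A ⊗[ℂ] B) ⊗[ℂ] C →ₗ[ℂ] ℂ)
    (a : A) (ha : a ≠ 0) (b : B) (hb : b ≠ 0)
    (h : ∀ c : C, φ ((a ⊗ₜ[ℂ] b) ⊗ₜ[ℂ] c) = 0) :
    ∃ c : C, c ≠ 0 ∧ (∀ a' : A, φ ((a' ⊗ₜ[ℂ] b) ⊗ₜ[ℂ] c) = 0) ∧
      (∀ b' : B, φ ((a ⊗ₜ[ℂ] b') ⊗ₜ[ℂ] c) = 0) := by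
  classical
  -- bilinear maps
  set T1 : C →ₗ[ℂ] (A →ₗ[ℂ] ℂ) := LinearMap.mk₂ ℂ (fun c a' => φ ((a' ⊗ₜ[ℂ] b) ⊗ₜ[ℂ] c))
    (by intro c c' a'; simp [TensorProduct.tmul_add])
    (by intro r c a'; simp [TensorProduct.tmul_smul])
    (by intro c a' a''; simp [TensorProduct.add_tmul])
    (by intro r c a'
        rw [← TensorProduct.smul_tmul', ← TensorProduct.smul_tmul', map_smul, smul_eq_mul]) with hT1
  set T2 : C →ₗ[ℂ] (B →ₗ[ℂ] ℂ) := LinearMap.mk₂ ℂ (fun c b' => φ ((a ⊗ₜ[ℂ] b') ⊗ₜ[ℂ] c))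
    (by intro c c' b'; simp [TensorProduct.tmul_add])
    (by intro r c b'; simp [TensorProduct.tmul_smul])
    (by intro c b' b''; simp [TensorProduct.tmul_add, TensorProduct.add_tmul])
    (by intro r c b'
        rw [TensorProduct.tmul_smul, ← TensorProduct.smul_tmul', map_smul, smul_eq_mul]) with hT2
  have hT1app : ∀ c a', T1 c a' = φ ((a' ⊗ₜ[ℂ] b) ⊗ₜ[ℂ] c) := fun c a' => rfl
  have hT2app : ∀ c b', T2 c b' = φ ((a ⊗ₜ[ℂ] b') ⊗ₜ[ℂ] c) := fun c b' => rfl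
  -- target subspaces
  set S1 : Submodule ℂ (A →ₗ[ℂ] ℂ) := LinearMap.ker (LinearMap.applyₗ a) with hS1
  set S2 : Submodule ℂ (B →ₗ[ℂ] ℂ) := LinearMap.ker (LinearMap.applyₗ b) with hS2
  haveI : Nontrivial A := ⟨a, 0, ha⟩
  haveI : Nontrivial B := ⟨b, 0, hb⟩
  have hAd : 0 < Module.finrank ℂ A := Module.finrank_pos
  have hBd : 0 < Module.finrank ℂ B := Module.finrank_pos
  have hS1ne : S1 ≠ ⊤ := by
    intro hS
    apply ha
    rw [← Module.forall_dual_apply_eq_zero_iff ℂ a]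
    intro f
    have : f ∈ S1 := hS ▸ Submodule.mem_top
    simpa [hS1, LinearMap.mem_ker] using this
  have hS2ne : S2 ≠ ⊤ := by
    intro hS
    apply hb
    rw [← Module.forall_dual_apply_eq_zero_iff ℂ b]
    intro f
    have : f ∈ S2 := hS ▸ Submodule.mem_top
    simpa [hS2, LinearMap.mem_ker] using this
  have hS1lt : Module.finrank ℂ S1 < Module.finrank ℂ A := by
    have := Submodule.finrank_lt (K := ℂ) (V := A →ₗ[ℂ] ℂ) hS1ne
    rwa [Module.finrank_linearMap, Module.finrank_self, mul_one] at this
  have hS2lt : Module.finrank ℂ S2 < Module.finrank ℂ B := by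
    have := Submodule.finrank_lt (K := ℂ) (V := B →ₗ[ℂ] ℂ) hS2ne
    rwa [Module.finrank_linearMap, Module.finrank_self, mul_one] at this
  -- restricted map
  have hmem1 : ∀ c : C, T1 c ∈ S1 := by
    intro c
    simp only [hS1, LinearMap.mem_ker, LinearMap.applyₗ_apply_apply]
    rw [hT1app]; exact h c
  have hmem2 : ∀ c : C, T2 c ∈ S2 := by
    intro c
    simp only [hS2, LinearMap.mem_ker, LinearMap.applyₗ_apply_apply]
    rw [hT2app]; exact h c
  set T : C →ₗ[ℂ] S1 × S2 :=
    (T1.codRestrict S1 hmem1).prod (T2.codRestrict S2 hmem2) with hT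
  have hrank : Module.finrank ℂ (S1 × S2) < Module.finrank ℂ C := by
    rw [Module.finrank_prod]
    omega
  have hker : LinearMap.ker T ≠ ⊥ := by
    intro hk
    have hinj : Function.Injective T := LinearMap.ker_eq_bot.mp hk
    have := LinearMap.finrank_le_finrank_of_injective hinj
    omega
  obtain ⟨c, hc, hc0⟩ := Submodule.exists_mem_ne_zero_of_ne_bot hker
  have hTc := LinearMap.mem_ker.mp hc
  rw [hT, LinearMap.prod_apply] at hTc
  have h1 : T1 c = 0 := congrArg Subtype.val (Prod.ext_iff.mp hTc).1
  have h2 : T2 c = 0 := congrArg Subtype.val (Prod.ext_iff.mp hTc).2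
  refine ⟨c, hc0, ?_, ?_⟩
  · intro a'; rw [← hT1app, h1]; rfl
  · intro b'; rw [← hT2app, h2]; rfl
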